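/- Let (S, A) be an average scheme on a norming dual pair (X,Y). Then (S,A) is weakly ergodic (i.e. σ-lim_α A_α x exists for every x ∈ X and σ'-lim_α A'_α y exists for every y ∈ Y) if and only if for every x ∈ X the net (A_α x) clusters in (X,σ) and for every y ∈ Y the net (A'_α y) clusters in (Y,σ'). -/

import Mathlib

open Filter Topology Set

noncomputable section

/-- A norming dual pair `(X, Y, ⟨·,·⟩)`: Banach spaces `X`, `Y` with a bilinear duality
such that each norm is recovered as a supremum of pairings against the unit ball. -/
structure NormingDualPair (X Y : Type*) [NormedAddCommGroup X] [NormedSpace ℝ X]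
    [NormedAddCommGroup Y] [NormedSpace ℝ Y] : Type _ where
  p : X →ₗ[ℝ] Y →ₗ[ℝ] ℝ
  norm_eq_left : ∀ x : X, ‖x‖ = ⨆ y : {y : Y // ‖y‖ ≤ 1}, |p x y.1|
  norm_eq_right : ∀ y : Y, ‖y‖ = ⨆ x : {x : X // ‖x‖ ≤ 1}, |p x.1 y|

variable {X Y : Type*} [NormedAddCommGroup X] [NormedSpace ℝ X]
  [NormedAddCommGroup Y] [NormedSpace ℝ Y]

/-- The weak topology `σ(X,Y)` on `X` induced by the pairing. -/
def NormingDualPair.sigma (ndp : NormingDualPair X Y) : TopologicalSpace X :=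
  TopologicalSpace.induced (fun x => fun y : Y => ndp.p x y) Pi.topologicalSpace

/-- The weak topology `σ(Y,X)` on `Y` induced by the pairing. -/
def NormingDualPair.sigma' (ndp : NormingDualPair X Y) : TopologicalSpace Y :=
  TopologicalSpace.induced (fun y => fun x : X => ndp.p x y) Pi.topologicalSpace

/-- The fixed space `fix(𝒮) = ⋂_{S ∈ 𝒮} ker (I - S)`. -/
def fixedSpace (S : Set (X →L[ℝ] X)) : Set X := {x | ∀ s ∈ S, s x = x}

/-- The range `rg(I - 𝒮) = {x - Sx : x ∈ X, S ∈ 𝒮}`. -/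
def rangeIminus (S : Set (X →L[ℝ] X)) : Set X := {z | ∃ x : X, ∃ s ∈ S, z = x - s x}

/-- An average scheme `(𝒮, (A_α)_{α ∈ ι})` on a norming dual pair `(X,Y)`:
a semigroup `𝒮 ⊆ L(X,σ)` (σ-continuity encoded via the existence of adjoints on `Y`)
and a net of σ-continuous operators satisfying (AS1)-(AS3). -/
structure AverageScheme (ndp : NormingDualPair X Y) (ι : Type*) [Preorder ι] : Type _ where
  S : Set (X →L[ℝ] X)
  adj : (X →L[ℝ] X) → (Y →L[ℝ] Y)
  one_mem : (1 : X →L[ℝ] X) ∈ S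
  comp_mem : ∀ s ∈ S, ∀ t ∈ S, s.comp t ∈ S
  adj_spec : ∀ s ∈ S, ∀ (x : X) (y : Y), ndp.p (s x) y = ndp.p x (adj s y)
  A : ι → (X →L[ℝ] X)
  A' : ι → (Y →L[ℝ] Y)
  A'_spec : ∀ (α : ι) (x : X) (y : Y), ndp.p (A α x) y = ndp.p x (A' α y)
  normBound : ∃ M : ℝ, ∀ α : ι, ‖A α‖ ≤ M
  as2 : ∀ (α : ι) (x : X),
    A α x ∈ @closure X ndp.sigma (convexHull ℝ {z | ∃ s ∈ S, z = s x})
  as2' : ∀ (α : ι) (y : Y),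
    A' α y ∈ @closure Y ndp.sigma' (convexHull ℝ {z | ∃ s ∈ S, z = adj s y})
  as3_left : ∀ s ∈ S, ∀ x : X, Tendsto (fun α : ι => A α (s x - x)) atTop (nhds 0)
  as3_right : ∀ s ∈ S, ∀ x : X, Tendsto (fun α : ι => s (A α x) - A α x) atTop (nhds 0)
  as3'_left : ∀ s ∈ S, ∀ y : Y, Tendsto (fun α : ι => A' α (adj s y - y)) atTop (nhds 0)
  as3'_right : ∀ s ∈ S, ∀ y : Y, Tendsto (fun α : ι => adj s (A' α y) - A' α y) atTop (nhds 0)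

/-- The fixed space of the adjoint semigroup `fix(𝒮')` in `Y`. -/
def AverageScheme.fix' {ι : Type*} [Preorder ι] {ndp : NormingDualPair X Y}
    (AS : AverageScheme ndp ι) : Set Y := {y | ∀ s ∈ AS.S, AS.adj s y = y}

/-- The range `rg(I - 𝒮')` in `Y`. -/
def AverageScheme.rg' {ι : Type*} [Preorder ι] {ndp : NormingDualPair X Y}
    (AS : AverageScheme ndp ι) : Set Y := {z | ∃ y : Y, ∃ s ∈ AS.S, z = y - AS.adj s y}

/-- A filter (net) clusters in a topology: every finer nontrivial filter (subnet) has a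
cluster point (i.e. a convergent subnet). -/
def ClustersIn {Z : Type*} (τ : TopologicalSpace Z) (F : Filter Z) : Prop :=
  ∀ G : Filter Z, G ≤ F → G.NeBot → ∃ z : Z, @ClusterPt Z τ z G

/-- Weak ergodicity: `σ`-convergence of `A_α x` for every `x` and `σ'`-convergence of
`A'_α y` for every `y`. -/
def AverageScheme.WeaklyErgodic {ι : Type*} [Preorder ι] {ndp : NormingDualPair X Y}
    (AS : AverageScheme ndp ι) : Prop :=
  (∀ x : X, ∃ l : X, Tendsto (fun α : ι => AS.A α x) atTop (@nhds X ndp.sigma l)) ∧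
  (∀ y : Y, ∃ l : Y, Tendsto (fun α : ι => AS.A' α y) atTop (@nhds Y ndp.sigma' l))

/-- The fixed space as a submodule. -/
def fixedSubmodule (S : Set (X →L[ℝ] X)) : Submodule ℝ X where
  carrier := {x | ∀ s ∈ S, s x = x}
  add_mem' := by
    intro a b ha hb s hs
    simp only [Set.mem_setOf_eq] at *
    rw [map_add, ha s hs, hb s hs]
  zero_mem' := by
    intro s hs
    simp
  smul_mem' := by
    intro c x hx s hs
    simp only [Set.mem_setOf_eq] at *
    rw [map_smul, hx s hs]

/-! Every σ-cluster point `z` of a subnet of `(A_α x)` is fixed by `𝒮`, by (AS3) and the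
σ-continuity of `𝒮`, hence by every `A_β`, by (AS2); the same holds on the `Y`-side. If `w` is
such a fixed σ'-cluster point of `(A'_α y)`, then `⟨z, y⟩ = ⟨z, w⟩ = ⟨x, w⟩`, so all these
cluster points coincide, and a net whose subnets all cluster at one and the same point converges
to it. The `Y`-side is the `X`-side of the flipped pair. -/

theorem ClusterPt.apply_eq_of_tendsto {α β κ : Type*} {tα : TopologicalSpace α}
    [TopologicalSpace β] [T2Space β] {f : α → β} {u : κ → α} {l : Filter κ} {G : Filter α}
    {z : α} {c : β} (hz : ClusterPt z G) (hG : G ≤ Filter.map u l) (hf : ContinuousAt f z)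
    (hfu : Tendsto (f ∘ u) l (𝓝 c)) : f z = c :=
  eq_of_nhds_neBot
    ((hz.map hf tendsto_map).mono ((Filter.map_mono hG).trans (Filter.map_map.trans_le hfu))).neBot

theorem ClustersIn.of_le_nhds {Z : Type*} {t : TopologicalSpace Z} {F : Filter Z} {z : Z}
    (h : F ≤ 𝓝 z) : ClustersIn t F :=
  fun _ hG _ => ⟨z, ClusterPt.of_le_nhds (hG.trans h)⟩

theorem ClustersIn.exists_le_nhds {Z : Type*} {t : TopologicalSpace Z} {F : Filter Z} [F.NeBot]
    (hF : ClustersIn t F)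
    (huniq : ∀ G₁ ≤ F, ∀ G₂ ≤ F, ∀ z₁ z₂, ClusterPt z₁ G₁ → ClusterPt z₂ G₂ → z₁ = z₂) :
    ∃ z, F ≤ 𝓝 z := by
  obtain ⟨z, hz⟩ := hF F le_rfl ‹_›
  refine ⟨z, le_iff_ultrafilter.2 fun U hU => ?_⟩
  obtain ⟨z₁, hz₁⟩ := hF U hU inferInstance
  rw [huniq U hU F le_rfl z₁ z hz₁ hz] at hz₁
  exact Ultrafilter.clusterPt_iff.1 hz₁

namespace NormingDualPair

variable (ndp : NormingDualPair X Y) {κ : Type*}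

def flip : NormingDualPair Y X where
  p := ndp.p.flip
  norm_eq_left := ndp.norm_eq_right
  norm_eq_right := ndp.norm_eq_left

theorem abs_p_le (x : X) (y : Y) : |ndp.p x y| ≤ ‖x‖ * ‖y‖ := by
  by_cases hb : BddAbove (range fun y : {y : Y // ‖y‖ ≤ 1} => |ndp.p x y.1|)
  · rcases eq_or_ne y 0 with rfl | hy
    · simp
    have hy' : 0 < ‖y‖ := norm_pos_iff.mpr hy
    have hunit : ‖‖y‖⁻¹ • y‖ ≤ 1 := by
      rw [norm_smul, norm_inv, norm_norm, inv_mul_cancel₀ hy'.ne']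
    have h := le_ciSup hb ⟨_, hunit⟩
    rw [← ndp.norm_eq_left, map_smul, smul_eq_mul, abs_mul, abs_inv, abs_norm,
      inv_mul_le_iff₀ hy'] at h
    linarith [mul_comm ‖x‖ ‖y‖]
  · have : x = 0 := norm_eq_zero.mp (by rw [ndp.norm_eq_left, Real.iSup_of_not_bddAbove hb])
    simp [this]

theorem eq_of_p_eq {x₁ x₂ : X} (h : ∀ y, ndp.p x₁ y = ndp.p x₂ y) : x₁ = x₂ := by
  have : Nonempty {y : Y // ‖y‖ ≤ 1} := ⟨⟨0, by simp⟩⟩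
  rw [← sub_eq_zero, ← norm_eq_zero, ndp.norm_eq_left]
  simp [h]

theorem continuous_p_left (y : Y) : Continuous fun x => ndp.p x y :=
  AddMonoidHomClass.continuous_of_bound (ndp.p.flip y) ‖y‖ fun x => by
    simpa [mul_comm] using ndp.abs_p_le x y

theorem continuous_sigma_p (y : Y) : Continuous[ndp.sigma, inferInstance] fun x => ndp.p x y :=
  @Continuous.comp X (Y → ℝ) ℝ ndp.sigma _ _ _ _ (continuous_apply y) continuous_induced_dom

theorem continuous_sigma'_p (x : X) : Continuous[ndp.sigma', inferInstance] fun y => ndp.p x y :=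
  ndp.flip.continuous_sigma_p x

theorem apply_eq_self_of_clusterPt {K : Type*} {S : Set K} {T : K → X →L[ℝ] X}
    (hT : ∀ s ∈ S, ∀ y, ∃ w, ∀ x, ndp.p (T s x) y = ndp.p x w) {u : κ → X} {l : Filter κ}
    (hu : ∀ s ∈ S, Tendsto (fun α => T s (u α) - u α) l (𝓝 0)) {G : Filter X}
    (hG : G ≤ map u l) {z : X} (hz : @ClusterPt X ndp.sigma z G) : ∀ s ∈ S, T s z = z := by
  intro s hs
  refine ndp.eq_of_p_eq fun y => ?_
  obtain ⟨w, hw⟩ := hT s hs y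
  have hlim : Tendsto ((fun x => ndp.p x w - ndp.p x y) ∘ u) l (𝓝 0) := by
    simpa [Function.comp_def, ← hw] using ((ndp.continuous_p_left y).tendsto 0).comp (hu s hs)
  let _ : TopologicalSpace X := ndp.sigma
  have hcont : Continuous fun x => ndp.p x w - ndp.p x y :=
    (ndp.continuous_sigma_p w).sub (ndp.continuous_sigma_p y)
  rw [hw, ← sub_eq_zero]
  exact hz.apply_eq_of_tendsto hG hcont.continuousAt hlim

theorem eq_of_mem_closure_convexHull_orbit {K : Type*} {S : Set K} {T : K → X →L[ℝ] X}
    {z v : X} (hz : ∀ s ∈ S, T s z = z)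
    (hv : v ∈ closure[ndp.sigma] (convexHull ℝ {w | ∃ s ∈ S, w = T s z})) : v = z := by
  let _ : TopologicalSpace X := ndp.sigma
  have horbit : {w | ∃ s ∈ S, w = T s z} ⊆ {z} := by
    rintro _ ⟨s, hs, rfl⟩
    exact hz s hs
  have hv' : v ∈ closure[ndp.sigma] {z} :=
    closure_mono ((convexHull_mono horbit).trans (convexHull_singleton z).subset) hv
  refine ndp.eq_of_p_eq fun y => ?_
  simpa using image_closure_subset_closure_image (ndp.continuous_sigma_p y) (mem_image_of_mem _ hv')

theorem p_eq_of_clusterPt {A : κ → X →L[ℝ] X} {A' : κ → Y →L[ℝ] Y}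
    (hA : ∀ α x y, ndp.p (A α x) y = ndp.p x (A' α y)) {l : Filter κ} {x z : X} {G : Filter X}
    (hG : G ≤ map (fun α => A α x) l) (hz : @ClusterPt X ndp.sigma z G) (hzA : ∀ α, A α z = z)
    {y w : Y} (hw : @ClusterPt Y ndp.sigma' w (map (fun α => A' α y) l))
    (hwA : ∀ α, A' α w = w) : ndp.p z y = ndp.p x w := by
  let _ : TopologicalSpace X := ndp.sigma
  let _ : TopologicalSpace Y := ndp.sigma'
  calc ndp.p z y = ndp.p z w :=
        (hw.apply_eq_of_tendsto le_rfl (ndp.continuous_sigma'_p z).continuousAt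
          (tendsto_const_nhds.congr fun α => by simp [← hA, hzA])).symm
    _ = ndp.p x w :=
        hz.apply_eq_of_tendsto hG (ndp.continuous_sigma_p w).continuousAt
          (tendsto_const_nhds.congr fun α => by simp [hA, hwA])

theorem exists_tendsto_of_clustersIn {A : κ → X →L[ℝ] X} {A' : κ → Y →L[ℝ] Y}
    (hA : ∀ α x y, ndp.p (A α x) y = ndp.p x (A' α y)) {l : Filter κ}
    (hAfix : ∀ x (G : Filter X) z, G ≤ map (fun α => A α x) l →
      @ClusterPt X ndp.sigma z G → ∀ α, A α z = z)
    (hA'fix : ∀ y (H : Filter Y) w, H ≤ map (fun α => A' α y) l →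
      @ClusterPt Y ndp.sigma' w H → ∀ α, A' α w = w)
    (hX : ∀ x, ClustersIn ndp.sigma (map (fun α => A α x) l))
    (hY : ∀ y, ClustersIn ndp.sigma' (map (fun α => A' α y) l)) (x : X) :
    ∃ z, Tendsto (fun α => A α x) l (@nhds X ndp.sigma z) := by
  rcases l.eq_or_neBot with rfl | hl
  · exact ⟨0, tendsto_bot⟩
  refine (hX x).exists_le_nhds fun G₁ hG₁ G₂ hG₂ z₁ z₂ hz₁ hz₂ => ndp.eq_of_p_eq fun y => ?_
  obtain ⟨w, hw⟩ := hY y _ le_rfl inferInstance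
  have hwA := hA'fix y _ w le_rfl hw
  rw [ndp.p_eq_of_clusterPt hA hG₁ hz₁ (hAfix x G₁ z₁ hG₁ hz₁) hw hwA,
    ndp.p_eq_of_clusterPt hA hG₂ hz₂ (hAfix x G₂ z₂ hG₂ hz₂) hw hwA]

end NormingDualPair

namespace AverageScheme

variable {ndp : NormingDualPair X Y} {ι : Type*} [Preorder ι] (AS : AverageScheme ndp ι)

theorem A_apply_eq_self_of_clusterPt (x : X) (G : Filter X) (z : X)
    (hG : G ≤ map (fun α => AS.A α x) atTop) (hz : @ClusterPt X ndp.sigma z G) (α : ι) :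
    AS.A α z = z :=
  ndp.eq_of_mem_closure_convexHull_orbit
    (ndp.apply_eq_self_of_clusterPt (T := fun s => s)
      (fun s hs y => ⟨AS.adj s y, (AS.adj_spec s hs · y)⟩) (fun s hs => AS.as3_right s hs x) hG hz)
    (AS.as2 α z)

theorem A'_apply_eq_self_of_clusterPt (y : Y) (H : Filter Y) (w : Y)
    (hH : H ≤ map (fun α => AS.A' α y) atTop) (hw : @ClusterPt Y ndp.sigma' w H) (α : ι) :
    AS.A' α w = w :=
  ndp.flip.eq_of_mem_closure_convexHull_orbit
    (ndp.flip.apply_eq_self_of_clusterPt (T := AS.adj)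
      (fun s hs x => ⟨s x, fun y => (AS.adj_spec s hs x y).symm⟩)
      (fun s hs => AS.as3'_right s hs y) hH hw)
    (AS.as2' α w)

end AverageScheme

theorem stmt8_general {ι : Type*} [Preorder ι]
    (ndp : NormingDualPair X Y) (AS : AverageScheme ndp ι) :
    AS.WeaklyErgodic ↔
      ((∀ x : X, ClustersIn ndp.sigma (Filter.map (fun α : ι => AS.A α x) atTop)) ∧
       (∀ y : Y, ClustersIn ndp.sigma' (Filter.map (fun α : ι => AS.A' α y) atTop))) := by
  constructor
  · rintro ⟨hX, hY⟩
    exact ⟨fun x => (hX x).elim fun _ h => ClustersIn.of_le_nhds h,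
      fun y => (hY y).elim fun _ h => ClustersIn.of_le_nhds h⟩
  · rintro ⟨hX, hY⟩
    have hAfix := AS.A_apply_eq_self_of_clusterPt
    have hA'fix := AS.A'_apply_eq_self_of_clusterPt
    exact ⟨ndp.exists_tendsto_of_clustersIn AS.A'_spec hAfix hA'fix hX hY,
      ndp.flip.exists_tendsto_of_clustersIn (fun α y x => (AS.A'_spec α x y).symm)
        hA'fix hAfix hY hX⟩

theorem stmt8 {ι : Type*} [Preorder ι] [Nonempty ι] [IsDirected ι (· ≤ ·)]
    (ndp : NormingDualPair X Y) (AS : AverageScheme ndp ι) :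
    AS.WeaklyErgodic ↔
      ((∀ x : X, ClustersIn ndp.sigma (Filter.map (fun α : ι => AS.A α x) atTop)) ∧
       (∀ y : Y, ClustersIn ndp.sigma' (Filter.map (fun α : ι => AS.A' α y) atTop))) :=
  stmt8_general ndp AS
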